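/- arXiv:1802.07632 — 5 statements merged into one kernel-verified Lean document; each statement's English description precedes it below -/
import Mathlib

section
/- Let G = (V,E) be a finite simple graph, let t_1 ∈ V, and let t_2,…,t_ℓ be ℓ−1 distinct neighbours of t_1 in G. Suppose there exists an ℓ-connected-partition V = V_1 ∪ … ∪ V_ℓ such that for all j ∈ [ℓ], t_j ∈ V_j, and the total degree Σ_{v∈V_j} deg_G(v) is at most D. For each j let τ_j be an arbitrary spanning tree of G[V_j], and for 2 ≤ j ≤ ℓ let e_j denote the edge {t_1,t_j}. Then τ := (∪_{j=1}^ℓ τ_j) ∪ (∪_{j=2}^ℓ {e_j}) is a spanning tree of G whose congestion is at most D. -/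
open SimpleGraph

namespace STCPaper

variable {V : Type*}

/-- The number of edges of `G` with exactly one endpoint in `S`. -/
noncomputable def cutCount (G : SimpleGraph V) (S : Set V) : ℕ :=
  {e ∈ G.edgeSet | ∃ a b, e = s(a, b) ∧ a ∈ S ∧ b ∉ S}.ncard

/-- The degree of a vertex. -/
noncomputable def deg (G : SimpleGraph V) (v : V) : ℕ := (G.neighborSet v).ncard

/-- The number of edges of a graph. -/
noncomputable def numEdges (G : SimpleGraph V) : ℕ := G.edgeSet.ncard

/-- `T` is a spanning tree of `G`. -/
def IsSpanningTree (G T : SimpleGraph V) : Prop := T ≤ G ∧ T.IsTree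

/-- The congestion of a spanning tree `T` of `G`: the maximum, over tree edges `e = {u,v}`,
of the number of edges of `G` crossing the cut induced by deleting `e` from `T`. -/
noncomputable def congestion (G T : SimpleGraph V) : ℕ :=
  sSup {c | ∃ u v, T.Adj u v ∧
    c = cutCount G {w | (T.deleteEdges {s(u, v)}).Reachable w u}}

/-- The spanning tree congestion of `G`. -/
noncomputable def STC (G : SimpleGraph V) : ℕ :=
  sInf {c | ∃ T, IsSpanningTree G T ∧ c = congestion G T}

/-- `G` is `k`-(vertex-)connected: it has more than `k` vertices, and deleting any
set of fewer than `k` vertices leaves a connected graph. -/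
def IsKConnected [Fintype V] (G : SimpleGraph V) (k : ℕ) : Prop :=
  k < Fintype.card V ∧ ∀ S : Set V, S.ncard < k → (G.induce Sᶜ).Connected

/-- A `k`-connected-partition: a partition of the vertex set into `k` nonempty parts,
each inducing a connected subgraph. -/
def IsConnectedPartition [Fintype V] [DecidableEq V] (G : SimpleGraph V) {k : ℕ}
    (P : Fin k → Finset V) : Prop :=
  (∀ j, (P j).Nonempty) ∧
  (∀ i j, i ≠ j → Disjoint (P i) (P j)) ∧
  Finset.univ.biUnion P = Finset.univ ∧
  ∀ j, (G.induce (↑(P j) : Set V)).Connected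

/-- The number of vertices outside `S` adjacent to some vertex of `S`. -/
noncomputable def nbrCount (G : SimpleGraph V) (S : Set V) : ℕ :=
  {v | v ∉ S ∧ ∃ u ∈ S, G.Adj u v}.ncard

/-- The number of vertices in `W` adjacent to some vertex of `S'`. -/
noncomputable def nbrWithinCount (G : SimpleGraph V) (S' W : Set V) : ℕ :=
  {v ∈ W | ∃ u ∈ S', G.Adj u v}.ncard

/-- The Erdős–Rényi measure: product Bernoulli(p) measure on potential edges. -/
noncomputable def erdosRenyi (n : ℕ) (p : ℝ) :
    MeasureTheory.Measure (Sym2 (Fin n) → Bool) :=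
  MeasureTheory.Measure.pi fun _ =>
    (PMF.bernoulli (min (Real.toNNReal p) 1) (min_le_right _ _)).toMeasure

/-- The simple graph sampled from an outcome `ω`. -/
def graphOf {n : ℕ} (ω : Sym2 (Fin n) → Bool) : SimpleGraph (Fin n) :=
  SimpleGraph.fromEdgeSet {e | ω e = true}

end STCPaper

/-! For every edge `uv` of the glued graph `T` there is a set `A`, contained in a single part,
that is a union of connected components of `T - uv` and contains exactly one of `u`, `v`:
for a star edge `t c — t i` it is the part of `t i`, and for an edge of `τ j` it is the
component of `τ j - uv` avoiding `t j` (the only vertex of that part meeting other parts in `T`).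
Hence every edge of the connected graph `T` is a bridge, so `T` is a tree, and the cut defined
by `uv` is the cut of `A` or of its complement, of size at most `∑ v ∈ P j, deg v ≤ D`. -/

namespace STCPaper

variable {V : Type*}

lemma cutCount_compl (G : SimpleGraph V) (S : Set V) : cutCount G Sᶜ = cutCount G S := by
  unfold cutCount
  congr 1
  ext e
  constructor <;>
  · rintro ⟨he, a, b, rfl, ha, hb⟩
    exact ⟨he, b, a, Sym2.eq_swap, by simpa using hb, by simpa using ha⟩

lemma cutCount_le_sum_deg [Finite V] (G : SimpleGraph V) {S : Set V} {F : Finset V}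
    (hS : S ⊆ F) : cutCount G S ≤ ∑ v ∈ F, deg G v := by
  classical
  have hsub : {e ∈ G.edgeSet | ∃ a b, e = s(a, b) ∧ a ∈ S ∧ b ∉ S} ⊆
      ⋃ v ∈ F, G.incidenceSet v := by
    rintro e ⟨he, a, b, rfl, ha, -⟩
    exact Set.mem_biUnion (hS ha) ⟨he, Sym2.mem_mk_left a b⟩
  calc cutCount G S ≤ (⋃ v ∈ F, G.incidenceSet v).ncard := Set.ncard_le_ncard hsub
    _ ≤ ∑ v ∈ F, (G.incidenceSet v).ncard := F.set_ncard_biUnion_le _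
    _ = ∑ v ∈ F, deg G v := by
      refine Finset.sum_congr rfl fun v _ => ?_
      rw [deg, ← Nat.card_coe_set_eq, ← Nat.card_coe_set_eq]
      exact Nat.card_congr (G.incidenceSetEquivNeighborSet v)

lemma congestion_le {G T : SimpleGraph V} {D : ℕ}
    (h : ∀ u v, T.Adj u v → cutCount G {w | (T.deleteEdges {s(u, v)}).Reachable w u} ≤ D) :
    congestion G T ≤ D := by
  refine csSup_le' ?_
  rintro _ ⟨u, v, huv, rfl⟩
  exact h u v huv

end STCPaper

namespace SimpleGraph

variable {V : Type*} {G H T : SimpleGraph V}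

lemma Reachable.mem_iff_of_forall_adj {A : Set V}
    (hA : ∀ ⦃w x⦄, H.Adj w x → (w ∈ A ↔ x ∈ A)) {a b : V} (h : H.Reachable a b) :
    a ∈ A ↔ b ∈ A := by
  obtain ⟨p⟩ := h
  induction p with
  | nil => rfl
  | cons hadj _ ih => exact (hA hadj).trans ih

lemma Walk.reachable_deleteEdges_or (u v : V) {w z : V} (p : T.Walk w z) :
    (T.deleteEdges {s(u, v)}).Reachable w z ∨ (T.deleteEdges {s(u, v)}).Reachable w u ∨
      (T.deleteEdges {s(u, v)}).Reachable w v := by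
  induction p with
  | nil => exact .inl .rfl
  | @cons a b _ hab _ ih =>
    by_cases he : s(a, b) = s(u, v)
    · rcases Sym2.eq_iff.mp he with ⟨rfl, -⟩ | ⟨rfl, -⟩
      exacts [.inr (.inl .rfl), .inr (.inr .rfl)]
    · have hab' : (T.deleteEdges {s(u, v)}).Adj a b := by simp [hab, he]
      exact ih.imp hab'.reachable.trans (Or.imp hab'.reachable.trans hab'.reachable.trans)

lemma Preconnected.reachable_deleteEdges_or (hT : T.Preconnected) (u v w : V) :
    (T.deleteEdges {s(u, v)}).Reachable w u ∨ (T.deleteEdges {s(u, v)}).Reachable w v := by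
  obtain ⟨p⟩ := hT w u
  rcases p.reachable_deleteEdges_or u v with h | h | h <;> tauto

lemma isAcyclic_of_isAcyclic_induce {s : Set V} (hs : ∀ ⦃a b⦄, G.Adj a b → a ∈ s)
    (h : (G.induce s).IsAcyclic) : G.IsAcyclic := by
  intro u c hc
  have hsupp : ∀ x ∈ c.support, x ∈ s := fun x hx => by
    obtain ⟨e, he, hxe⟩ := (Walk.mem_support_iff_exists_mem_edges_of_not_nil hc.not_nil).mp hx
    induction e using Sym2.ind with
    | h a b =>
      have hab : G.Adj a b := c.edges_subset_edgeSet he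
      rcases Sym2.mem_iff.mp hxe with rfl | rfl
      exacts [hs hab, hs hab.symm]
  refine h (c.induce s hsupp) ((Walk.isCycle_map_iff_of_injective
    (f := (Embedding.induce (G := G) s).toHom) (Embedding.induce (G := G) s).injective).mp ?_)
  rwa [Walk.map_induce]

/-- `A` is a union of connected components of `T - uv` containing exactly one of `u`, `v`. -/
def SeparatesEdge (T : SimpleGraph V) (u v : V) (A : Set V) : Prop :=
  (∀ ⦃w x⦄, (T.deleteEdges {s(u, v)}).Adj w x → (w ∈ A ↔ x ∈ A)) ∧
    (u ∈ A ↔ v ∉ A)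

variable {u v : V} {A : Set V}

lemma SeparatesEdge.not_reachable (h : T.SeparatesEdge u v A) :
    ¬(T.deleteEdges {s(u, v)}).Reachable u v := fun hr => by
  have := hr.mem_iff_of_forall_adj h.1
  have := h.2
  tauto

lemma SeparatesEdge.cutCount_eq (h : T.SeparatesEdge u v A) (hT : T.Preconnected)
    (G : SimpleGraph V) :
    STCPaper.cutCount G {w | (T.deleteEdges {s(u, v)}).Reachable w u} =
      STCPaper.cutCount G A := by
  have hside : ∀ w, (T.deleteEdges {s(u, v)}).Reachable w u ↔ (w ∈ A ↔ u ∈ A) := by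
    refine fun w => ⟨fun hr => hr.mem_iff_of_forall_adj h.1, fun hw => ?_⟩
    refine (hT.reachable_deleteEdges_or u v w).resolve_right fun hr => ?_
    have := hr.mem_iff_of_forall_adj h.1
    have := h.2
    tauto
  by_cases hu : u ∈ A
  · congr 1
    ext w
    simp [hside, hu]
  · rw [← STCPaper.cutCount_compl]
    congr 1
    ext w
    simp [hside, hu]

lemma isAcyclic_of_forall_adj_separatesEdge
    (h : ∀ u v, T.Adj u v → ∃ A, T.SeparatesEdge u v A) : T.IsAcyclic :=
  isAcyclic_iff_forall_adj_isBridge.mpr fun u v huv =>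
    (h u v huv).elim fun _ hA => isBridge_iff.mpr hA.not_reachable

end SimpleGraph

namespace STCPaper

open Function

variable {V ι : Type*} {τ : ι → SimpleGraph V} {t : ι → V} {c : ι} {P : ι → Set V}

variable (τ t c) in
def starGlue : SimpleGraph V :=
  (⨆ j, τ j) ⊔ fromEdgeSet {e | ∃ j, j ≠ c ∧ e = s(t c, t j)}

lemma starGlue_adj {a b : V} : (starGlue τ t c).Adj a b ↔
    (∃ j, (τ j).Adj a b) ∨ (∃ j, j ≠ c ∧ s(a, b) = s(t c, t j)) ∧ a ≠ b := by
  simp [starGlue]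

lemma starGlue_le {G : SimpleGraph V} (hτ : ∀ j, τ j ≤ G)
    (ht : ∀ j, j ≠ c → G.Adj (t c) (t j)) : starGlue τ t c ≤ G := by
  refine sup_le (iSup_le hτ) fun a b ⟨⟨j, hj, he⟩, _⟩ => ?_
  rcases Sym2.eq_iff.mp he with ⟨rfl, rfl⟩ | ⟨rfl, rfl⟩
  exacts [ht j hj, (ht j hj).symm]

lemma eq_of_mem_of_pairwise_disjoint (hP : Pairwise (Disjoint on P)) {i j : ι} {v : V}
    (hi : v ∈ P i) (hj : v ∈ P j) : i = j :=
  by_contra fun h => Set.disjoint_left.mp (hP h) hi hj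

lemma mem_iff_of_adj (hP : Pairwise (Disjoint on P))
    (hτP : ∀ j a b, (τ j).Adj a b → a ∈ P j ∧ b ∈ P j) {j k : ι} {a b : V}
    (h : (τ k).Adj a b) : a ∈ P j ↔ b ∈ P j := by
  obtain ⟨ha, hb⟩ := hτP k a b h
  exact ⟨fun h' => eq_of_mem_of_pairwise_disjoint hP ha h' ▸ hb,
    fun h' => eq_of_mem_of_pairwise_disjoint hP hb h' ▸ ha⟩

lemma starGlue_connected (hP : Pairwise (Disjoint on P)) (htP : ∀ j, t j ∈ P j)
    (hcover : ∀ v, ∃ j, v ∈ P j) (hτ : ∀ j, ((τ j).induce (P j)).Connected) :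
    (starGlue τ t c).Connected := by
  have hreach : ∀ v, (starGlue τ t c).Reachable v (t c) := by
    intro v
    obtain ⟨j, hv⟩ := hcover v
    have hvj : (starGlue τ t c).Reachable v (t j) :=
      (((hτ j).preconnected ⟨v, hv⟩ ⟨t j, htP j⟩).map (Embedding.induce _).toHom).mono
        ((le_iSup τ j).trans le_sup_left)
    by_cases hj : j = c
    · exact hj ▸ hvj
    · refine hvj.trans (starGlue_adj.mpr (.inr ⟨⟨j, hj, rfl⟩, fun h => ?_⟩)).symm.reachable
      exact hj (eq_of_mem_of_pairwise_disjoint hP (htP j) (h ▸ htP c))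
  exact (connected_iff _).mpr ⟨fun a b => (hreach a).trans (hreach b).symm, ⟨t c⟩⟩

lemma separatesEdge_of_star (hP : Pairwise (Disjoint on P)) (htP : ∀ j, t j ∈ P j)
    (hτP : ∀ j a b, (τ j).Adj a b → a ∈ P j ∧ b ∈ P j) {i : ι} (hi : i ≠ c) {u v : V}
    (he : s(u, v) = s(t c, t i)) : (starGlue τ t c).SeparatesEdge u v (P i) := by
  have hc : t c ∉ P i := fun h => hi (eq_of_mem_of_pairwise_disjoint hP (htP c) h).symm
  refine ⟨fun w x hwx => ?_, ?_⟩
  · rw [deleteEdges_adj, starGlue_adj, Set.mem_singleton_iff] at hwx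
    obtain ⟨⟨k, hk⟩ | ⟨⟨m, -, hem⟩, -⟩, hne⟩ := hwx
    · exact mem_iff_of_adj hP hτP hk
    · have hmi : m ≠ i := by
        rintro rfl
        exact hne (hem.trans he.symm)
      have hout : ∀ z, z ∈ s(t c, t m) → z ∉ P i := by
        rintro z hz hzi
        rcases Sym2.mem_iff.mp hz with rfl | rfl
        exacts [hc hzi, hmi (eq_of_mem_of_pairwise_disjoint hP (htP m) hzi)]
      exact iff_of_false (hout w (hem ▸ Sym2.mem_mk_left w x))
        (hout x (hem ▸ Sym2.mem_mk_right w x))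
  · rcases Sym2.eq_iff.mp he with ⟨rfl, rfl⟩ | ⟨rfl, rfl⟩ <;> simp [hc, htP i]

lemma exists_separatesEdge_of_tree_adj (hP : Pairwise (Disjoint on P)) (htP : ∀ j, t j ∈ P j)
    (hτP : ∀ j a b, (τ j).Adj a b → a ∈ P j ∧ b ∈ P j) {j : ι} (hτ : (τ j).IsAcyclic)
    {u v : V} (huv : (τ j).Adj u v) : ∃ A ⊆ P j, (starGlue τ t c).SeparatesEdge u v A := by
  set R := (τ j).deleteEdges {s(u, v)}
  have hbridge : ¬R.Reachable u v :=
    isBridge_iff.mp (isAcyclic_iff_forall_adj_isBridge.mp hτ huv)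
  have hRP : ∀ {a b}, R.Reachable a b → (a ∈ P j ↔ b ∈ P j) :=
    Reachable.mem_iff_of_forall_adj fun _ _ hab => mem_iff_of_adj hP hτP (deleteEdges_le _ hab)
  have hclosed : ∀ y ∈ P j, ¬R.Reachable (t j) y → ∀ ⦃w x⦄,
      ((starGlue τ t c).deleteEdges {s(u, v)}).Adj w x →
        (R.Reachable w y ↔ R.Reachable x y) := by
    intro y hy hty w x hwx
    rw [deleteEdges_adj, starGlue_adj] at hwx
    obtain ⟨⟨k, hk⟩ | ⟨⟨m, -, hem⟩, -⟩, hne⟩ := hwx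
    · by_cases hkj : k = j
      · subst hkj
        have hR : R.Adj w x := by simp [R, hk, hne]
        exact ⟨hR.symm.reachable.trans, hR.reachable.trans⟩
      · have hout : ∀ z ∈ P k, ¬R.Reachable z y := fun z hz h =>
          hkj (eq_of_mem_of_pairwise_disjoint hP hz ((hRP h).mpr hy))
        exact iff_of_false (hout w (hτP k w x hk).1) (hout x (hτP k w x hk).2)
    · have hout : ∀ z, z ∈ s(t c, t m) → ¬R.Reachable z y := by
        intro z hz h
        have hzj : z ∈ P j := (hRP h).mpr hy
        rcases Sym2.mem_iff.mp hz with rfl | rfl <;>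
          exact hty (eq_of_mem_of_pairwise_disjoint hP (htP _) hzj ▸ h)
      exact iff_of_false (hout w (hem ▸ Sym2.mem_mk_left w x))
        (hout x (hem ▸ Sym2.mem_mk_right w x))
  obtain ⟨hu, hv⟩ := hτP j u v huv
  by_cases hju : R.Reachable (t j) u
  · refine ⟨{z | R.Reachable z v}, fun z hz => (hRP hz).mpr hv,
      hclosed v hv fun h => hbridge (hju.symm.trans h), ?_⟩
    simp [hbridge]
  · refine ⟨{z | R.Reachable z u}, fun z hz => (hRP hz).mpr hu, hclosed u hu hju, ?_⟩
    simpa using fun h : R.Reachable v u => hbridge h.symm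

lemma exists_separatesEdge (hP : Pairwise (Disjoint on P)) (htP : ∀ j, t j ∈ P j)
    (hτP : ∀ j a b, (τ j).Adj a b → a ∈ P j ∧ b ∈ P j) (hτ : ∀ j, (τ j).IsAcyclic)
    {u v : V} (huv : (starGlue τ t c).Adj u v) :
    ∃ j, ∃ A ⊆ P j, (starGlue τ t c).SeparatesEdge u v A := by
  rcases starGlue_adj.mp huv with ⟨j, hj⟩ | ⟨⟨i, hi, he⟩, -⟩
  · exact ⟨j, exists_separatesEdge_of_tree_adj hP htP hτP (hτ j) hj⟩
  · exact ⟨i, P i, subset_rfl, separatesEdge_of_star hP htP hτP hi he⟩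

end STCPaper

open STCPaper in
theorem stmt_3_general {V : Type*} [Fintype V] [DecidableEq V]
    (G : SimpleGraph V) (ℓ : ℕ) (hℓ : 0 < ℓ)
    (t : Fin ℓ → V)
    (hadj : ∀ j : Fin ℓ, j ≠ ⟨0, hℓ⟩ → G.Adj (t ⟨0, hℓ⟩) (t j))
    (P : Fin ℓ → Finset V) (hP : IsConnectedPartition G P)
    (htP : ∀ j, t j ∈ P j)
    (D : ℕ) (hD : ∀ j, ∑ v ∈ P j, deg G v ≤ D)
    (τ : Fin ℓ → SimpleGraph V)
    (hτle : ∀ j, τ j ≤ G)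
    (hτsupp : ∀ j, ∀ a b : V, (τ j).Adj a b → a ∈ P j ∧ b ∈ P j)
    (hτtree : ∀ j, ((τ j).induce (↑(P j) : Set V)).IsTree) :
    IsSpanningTree G ((⨆ j, τ j) ⊔
        SimpleGraph.fromEdgeSet {e | ∃ j : Fin ℓ, j ≠ ⟨0, hℓ⟩ ∧ e = s(t ⟨0, hℓ⟩, t j)}) ∧
      congestion G ((⨆ j, τ j) ⊔
        SimpleGraph.fromEdgeSet {e | ∃ j : Fin ℓ, j ≠ ⟨0, hℓ⟩ ∧ e = s(t ⟨0, hℓ⟩, t j)}) ≤ D := by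
  obtain ⟨-, hdisj, hcover, -⟩ := hP
  change IsSpanningTree G (starGlue τ t ⟨0, hℓ⟩) ∧ congestion G (starGlue τ t ⟨0, hℓ⟩) ≤ D
  have hpart : Pairwise (Function.onFun Disjoint fun j => (P j : Set V)) :=
    fun i j hij => Finset.disjoint_coe.mpr (hdisj i j hij)
  have hmem : ∀ v, ∃ j, v ∈ (P j : Set V) := fun v => by
    simpa using Finset.ext_iff.mp hcover v
  have hconn : (starGlue τ t ⟨0, hℓ⟩).Connected :=
    starGlue_connected hpart htP hmem fun j => (hτtree j).connected
  have hacyc : ∀ j, (τ j).IsAcyclic := fun j =>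
    isAcyclic_of_isAcyclic_induce (fun a b h => (hτsupp j a b h).1) (hτtree j).isAcyclic
  have hsep : ∀ u v, (starGlue τ t ⟨0, hℓ⟩).Adj u v → ∃ j, ∃ A ⊆ (P j : Set V),
      (starGlue τ t ⟨0, hℓ⟩).SeparatesEdge u v A := fun u v huv =>
    exists_separatesEdge hpart htP hτsupp hacyc huv
  refine ⟨⟨starGlue_le hτle hadj, hconn, ?_⟩, congestion_le fun u v huv => ?_⟩
  · refine isAcyclic_of_forall_adj_separatesEdge fun u v huv => ?_
    obtain ⟨-, A, -, hA⟩ := hsep u v huv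
    exact ⟨A, hA⟩
  · obtain ⟨j, A, hAP, hA⟩ := hsep u v huv
    rw [hA.cutCount_eq hconn.preconnected]
    exact (cutCount_le_sum_deg G hAP).trans (hD j)

open STCPaper in
/-- Gluing spanning trees of the parts of an `ℓ`-connected-partition along a star at `t 0`
yields a spanning tree of `G` with congestion at most `D`. -/
theorem stmt_3 {V : Type*} [Fintype V] [DecidableEq V]
    (G : SimpleGraph V) (ℓ : ℕ) (hℓ : 0 < ℓ)
    (t : Fin ℓ → V) (ht : Function.Injective t)
    (hadj : ∀ j : Fin ℓ, j ≠ ⟨0, hℓ⟩ → G.Adj (t ⟨0, hℓ⟩) (t j))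
    (P : Fin ℓ → Finset V) (hP : IsConnectedPartition G P)
    (htP : ∀ j, t j ∈ P j)
    (D : ℕ) (hD : ∀ j, ∑ v ∈ P j, deg G v ≤ D)
    (τ : Fin ℓ → SimpleGraph V)
    (hτle : ∀ j, τ j ≤ G)
    (hτsupp : ∀ j, ∀ a b : V, (τ j).Adj a b → a ∈ P j ∧ b ∈ P j)
    (hτtree : ∀ j, ((τ j).induce (↑(P j) : Set V)).IsTree) :
    IsSpanningTree G ((⨆ j, τ j) ⊔
        SimpleGraph.fromEdgeSet {e | ∃ j : Fin ℓ, j ≠ ⟨0, hℓ⟩ ∧ e = s(t ⟨0, hℓ⟩, t j)}) ∧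
      congestion G ((⨆ j, τ j) ⊔
        SimpleGraph.fromEdgeSet {e | ∃ j : Fin ℓ, j ≠ ⟨0, hℓ⟩ ∧ e = s(t ⟨0, hℓ⟩, t j)}) ≤ D :=
  stmt_3_general G ℓ hℓ t hadj P hP htP D hD τ hτle hτsupp hτtree
end

section
/- For all sufficiently large integers n and every integer m with 16·n·ln n ≤ m ≤ n²/2, there exists a connected finite simple graph H on n vertices whose number of edges lies between m/2 and 2m, such that for every vertex set S with |S| ≤ n/2, the number of edges of H with exactly one endpoint in S is at least (m/(2n))·|S|. -/
open SimpleGraph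

/-! No randomness is needed: take the complete split graph whose clique `A` has
`a = ⌊m/n⌋ + 1` vertices, so that `m ≤ a n ≤ 2m`. It has between `a n / 2` and `a n` edges.
If `S` contains at least half of `A`, those vertices alone send `a/2 · |Sᶜ| ≥ a |S| / 2` edges
out of `S`; otherwise every vertex of `S` is adjacent to the more than `a/2` vertices of `A \ S`.
Either way the cut has at least `a |S| / 2 ≥ m |S| / (2n)` edges. -/

open Finset

namespace STCPaper

variable {V : Type*}

lemma numEdges_eq_card_edgeFinset (G : SimpleGraph V) [Fintype G.edgeSet] :
    numEdges G = #G.edgeFinset := by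
  rw [numEdges, ← coe_edgeFinset, Set.ncard_coe_finset]

lemma card_filter_adj_le_cutCount [Fintype V] [DecidableEq V] (G : SimpleGraph V)
    [DecidableRel G.Adj] (S : Finset V) :
    #{p ∈ S ×ˢ Sᶜ | G.Adj p.1 p.2} ≤ cutCount G ↑S := by
  rw [cutCount, ← Set.ncard_coe_finset]
  refine Set.ncard_le_ncard_of_injOn (fun p => s(p.1, p.2)) ?_ ?_ (Set.toFinite _)
  · rintro ⟨u, v⟩ hp
    simp only [coe_filter, mem_product, mem_compl, Set.mem_ofPred_eq] at hp
    exact ⟨hp.2, u, v, rfl, hp.1.1, hp.1.2⟩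
  · rintro ⟨u, v⟩ hp ⟨u', v'⟩ hp' h
    simp only [coe_filter, mem_product, mem_compl, Set.mem_ofPred_eq] at hp hp'
    rcases Sym2.eq_iff.1 h with ⟨rfl, rfl⟩ | ⟨rfl, rfl⟩
    · rfl
    · exact absurd hp.1.1 hp'.1.2

def completeSplitGraph (A : Finset V) : SimpleGraph V where
  Adj u v := u ≠ v ∧ (u ∈ A ∨ v ∈ A)

@[simp]
lemma completeSplitGraph_adj {A : Finset V} {u v : V} :
    (completeSplitGraph A).Adj u v ↔ u ≠ v ∧ (u ∈ A ∨ v ∈ A) :=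
  Iff.rfl

instance [DecidableEq V] (A : Finset V) : DecidableRel (completeSplitGraph A).Adj :=
  fun _ _ => decidable_of_iff' _ completeSplitGraph_adj

lemma completeSplitGraph_connected {A : Finset V} (hA : A.Nonempty) :
    (completeSplitGraph A).Connected := by
  obtain ⟨a, ha⟩ := hA
  have reach (v : V) : (completeSplitGraph A).Reachable v a := by
    by_cases hv : v = a
    · rw [hv]
    · exact SimpleGraph.Adj.reachable ⟨hv, Or.inr ha⟩
  exact (SimpleGraph.connected_iff _).2 ⟨fun u v => (reach u).trans (reach v).symm, ⟨a⟩⟩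

section CompleteSplitGraph

variable [Fintype V] [DecidableEq V] (A : Finset V)

lemma degree_completeSplitGraph_of_mem {v : V} (hv : v ∈ A) :
    (completeSplitGraph A).degree v = Fintype.card V - 1 := by
  rw [← SimpleGraph.card_neighborFinset_eq_degree, ← card_univ, ← card_erase_of_mem (mem_univ v)]
  congr 1
  ext w
  simp [hv, eq_comm]

lemma degree_completeSplitGraph_of_notMem {v : V} (hv : v ∉ A) :
    (completeSplitGraph A).degree v = #A := by
  rw [← SimpleGraph.card_neighborFinset_eq_degree]
  congr 1
  ext w
  simp only [SimpleGraph.mem_neighborFinset, completeSplitGraph_adj, hv, false_or]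
  exact ⟨And.right, fun hw => ⟨fun h => hv (h ▸ hw), hw⟩⟩

lemma two_mul_numEdges_completeSplitGraph :
    2 * numEdges (completeSplitGraph A) =
      #A * (Fintype.card V - 1) + (Fintype.card V - #A) * #A := by
  rw [numEdges_eq_card_edgeFinset, ← SimpleGraph.sum_degrees_eq_twice_card_edges,
    ← sum_filter_add_sum_filter_not univ (· ∈ A)]
  rw [sum_congr rfl fun v hv => degree_completeSplitGraph_of_mem A (mem_filter.1 hv).2,
    sum_congr rfl fun v hv => degree_completeSplitGraph_of_notMem A (mem_filter.1 hv).2]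
  have hcompl : ({v | v ∉ A} : Finset V) = Aᶜ := by ext; simp
  simp [hcompl, card_compl]

lemma numEdges_completeSplitGraph_bounds (hA : #A < Fintype.card V) :
    #A * Fintype.card V ≤ 2 * numEdges (completeSplitGraph A) ∧
      numEdges (completeSplitGraph A) ≤ #A * Fintype.card V := by
  have h := two_mul_numEdges_completeSplitGraph A
  obtain ⟨k, hk⟩ : ∃ k, Fintype.card V = #A + k + 1 := ⟨Fintype.card V - #A - 1, by omega⟩
  rw [hk, show #A + k + 1 - 1 = #A + k by omega, show #A + k + 1 - #A = k + 1 by omega] at h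
  rw [hk]
  constructor <;> nlinarith [h]

lemma card_mul_card_le_cutCount_completeSplitGraph (S : Finset V) :
    #(S ∩ A) * #Sᶜ + #(S \ A) * #(A \ S) ≤ cutCount (completeSplitGraph A) ↑S := by
  refine le_trans ?_ (card_filter_adj_le_cutCount _ S)
  rw [← card_product, ← card_product, ← card_union_of_disjoint]
  · refine card_le_card fun p hp => ?_
    simp only [mem_union, mem_product, mem_inter, mem_sdiff, mem_compl] at hp
    simp only [mem_filter, mem_product, mem_compl, completeSplitGraph_adj]
    rcases hp with ⟨⟨hS, hA⟩, hS'⟩ | ⟨⟨hS, -⟩, hA, hS'⟩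
    · exact ⟨⟨hS, hS'⟩, fun h => hS' (h ▸ hS), Or.inl hA⟩
    · exact ⟨⟨hS, hS'⟩, fun h => hS' (h ▸ hS), Or.inr hA⟩
  · exact disjoint_left.2 fun p h₁ h₂ => (mem_sdiff.1 (mem_product.1 h₂).1).2
      (mem_inter.1 (mem_product.1 h₁).1).2

lemma card_mul_card_le_two_mul_cutCount_completeSplitGraph (S : Finset V)
    (hS : 2 * #S ≤ Fintype.card V) :
    #A * #S ≤ 2 * cutCount (completeSplitGraph A) ↑S := by
  refine le_trans ?_ (Nat.mul_le_mul_left 2 (card_mul_card_le_cutCount_completeSplitGraph A S))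
  have hS₁₂ : #(S ∩ A) + #(S \ A) = #S := card_inter_add_card_sdiff S A
  have hSc : #Sᶜ + #S = Fintype.card V := card_compl_add_card S
  have hA₁₂ : #(A \ S) + #(S ∩ A) = #A := by
    rw [inter_comm]; exact card_sdiff_add_card_inter A S
  have hAV : #A ≤ Fintype.card V := card_le_univ A
  rcases le_or_gt #A (2 * #(S ∩ A)) with h | h <;> nlinarith

end CompleteSplitGraph

lemma exists_mul_mem_Icc {n m : ℕ} (hn : 3 ≤ n) (hnm : n ≤ m) (hmn : 2 * m ≤ n * n) :
    ∃ a, 0 < a ∧ a < n ∧ m ≤ a * n ∧ a * n ≤ 2 * m := by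
  have hq : m / n * n ≤ m := Nat.div_mul_le_self m n
  have hq' : m < m / n * n + n := Nat.lt_div_mul_add (by omega)
  have h2q : 2 * (m / n) ≤ n := Nat.le_of_mul_le_mul_right (by nlinarith) (by omega : 0 < n)
  exact ⟨m / n + 1, by omega, by omega, by nlinarith, by nlinarith⟩

end STCPaper

open STCPaper in
/-- Existence of an `n`-vertex edge expander `H(n,m)` with between `m/2` and `2m` edges. -/
theorem stmt_8 :
    ∃ n₀ : ℕ, ∀ n : ℕ, n₀ ≤ n → ∀ m : ℕ,
      16 * (n : ℝ) * Real.log n ≤ m → (m : ℝ) ≤ (n : ℝ) ^ 2 / 2 →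
      ∃ H : SimpleGraph (Fin n), H.Connected ∧
        (m : ℝ) / 2 ≤ (numEdges H : ℝ) ∧ (numEdges H : ℝ) ≤ 2 * m ∧
        ∀ S : Finset (Fin n), (S.card : ℝ) ≤ (n : ℝ) / 2 →
          (m : ℝ) / (2 * n) * S.card ≤ (cutCount H ↑S : ℝ) := by
  refine ⟨3, fun n hn m hm_log hm_sq => ?_⟩
  have hnR : (3 : ℝ) ≤ n := by exact_mod_cast hn
  have hlog : 1 ≤ Real.log n := by
    rw [Real.le_log_iff_exp_le (by linarith)]
    linarith [Real.exp_one_lt_d9]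
  have hnm : n ≤ m := by exact_mod_cast (by nlinarith : (n : ℝ) ≤ m)
  have hmn : 2 * m ≤ n * n := by
    exact_mod_cast (by push_cast; linarith : ((2 * m : ℕ) : ℝ) ≤ (n * n : ℕ))
  obtain ⟨a, ha, han, hma, ham⟩ := exists_mul_mem_Icc hn hnm hmn
  obtain ⟨A, -, hA⟩ := (univ : Finset (Fin n)).exists_subset_card_eq (by simpa using han.le)
  have hE := numEdges_completeSplitGraph_bounds A (by simpa [hA] using han)
  rw [hA, Fintype.card_fin] at hE
  refine ⟨completeSplitGraph A, completeSplitGraph_connected (card_pos.1 (hA ▸ ha)),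
    ?_, ?_, fun S hS => ?_⟩
  · have : (m : ℝ) ≤ 2 * numEdges (completeSplitGraph A) := by exact_mod_cast hma.trans hE.1
    linarith
  · exact_mod_cast hE.2.trans ham
  · have hcut := card_mul_card_le_two_mul_cutCount_completeSplitGraph A S
      (by rw [Fintype.card_fin]; exact_mod_cast (by linarith : (2 * S.card : ℝ) ≤ n))
    rw [hA] at hcut
    have hmaR : (m : ℝ) ≤ a * n := by exact_mod_cast hma
    have hcutR : (a : ℝ) * S.card ≤ 2 * cutCount (completeSplitGraph A) ↑S := by exact_mod_cast hcut
    calc (m : ℝ) / (2 * n) * S.card ≤ a * n / (2 * n) * S.card := by gcongr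
      _ = a * S.card / 2 := by field_simp
      _ ≤ cutCount (completeSplitGraph A) ↑S := by linarith
end

section
/- For every integer n ≥ 4 and every real p with 32·(ln n)/n ≤ p ≤ 1, in the Erdős–Rényi random graph G(n,p) the probability that there exists a vertex set S with |S| ≤ n/2 such that the number of edges with exactly one endpoint in S is less than (p/2)·|S|·(n−|S|) is at most 2/n. -/
open SimpleGraph

/-!
For a fixed `S`, the cut `E(S, V ∖ S)` counts which of the `|S| (n - |S|)` potential crossing edges
are present, a sum of independent Bernoulli(`p`) variables. The Chernoff bound at `t = -log 2`
bounds the probability that it falls below half its mean `μ` by `exp (-μ / 8)`, which is at most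
`n ^ (-2 |S|)` once `p ≥ 32 log n / n` and `|S| ≤ n / 2`. A union bound over nonempty `S` then gives
`∑ n ^ (-2 |S|) = (1 + n⁻²) ^ n - 1 ≤ exp (1 / n) - 1 ≤ 2 / n`.
-/

open MeasureTheory ProbabilityTheory Finset Real

section BernoulliChernoff

variable {ι : Type*} [Fintype ι] (ν : Measure Bool) [IsProbabilityMeasure ν]

lemma measureReal_singleton_false : ν.real {false} = 1 - ν.real {true} := by
  rw [← probReal_compl_eq_one_sub (measurableSet_singleton _)]
  congr; ext b; simp

lemma mgf_ite_eval (i : ι) (t : ℝ) :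
    mgf (fun ω : ι → Bool => if ω i then (1 : ℝ) else 0) (Measure.pi fun _ => ν) t =
      1 - ν.real {true} + ν.real {true} * exp t := by
  have := integral_comp_eval (μ := fun _ : ι => ν) (i := i)
    (f := fun b : Bool => exp (t * if b then 1 else 0)) (by fun_prop)
  rw [mgf, this, integral_fintype (.of_finite), Fintype.sum_bool, measureReal_singleton_false]
  simp only [↓reduceIte, mul_one, smul_eq_mul, Bool.false_eq_true, mul_zero, exp_zero]
  ring

theorem measureReal_card_filter_le_le_exp_mul (C : Finset ι) (ε : ℝ) {t : ℝ} (ht : t ≤ 0) :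
    (Measure.pi fun _ : ι => ν).real {ω | (#{i ∈ C | ω i} : ℝ) ≤ ε} ≤
      exp (-t * ε) * (1 - ν.real {true} + ν.real {true} * exp t) ^ #C := by
  set X : ι → (ι → Bool) → ℝ := fun i ω => if ω i then 1 else 0
  have hcard : ∀ ω : ι → Bool, (#{i ∈ C | ω i} : ℝ) = (∑ i ∈ C, X i) ω := by
    intro ω
    simp [X, Finset.sum_boole]
  have hindep : iIndepFun X (Measure.pi fun _ : ι => ν) :=
    iIndepFun_pi (X := fun _ (b : Bool) => if b then (1 : ℝ) else 0) fun _ => by fun_prop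
  simp_rw [hcard]
  calc _ ≤ exp (-t * ε) * mgf (∑ i ∈ C, X i) _ t :=
        measure_le_le_exp_mul_mgf ε ht (.of_finite)
    _ = _ := by
        rw [hindep.mgf_sum (fun _ => by fun_prop), prod_congr rfl fun i _ => mgf_ite_eval ν i t,
          prod_const]

theorem measureReal_card_filter_le_half_le (C : Finset ι) :
    (Measure.pi fun _ : ι => ν).real {ω | (#{i ∈ C | ω i} : ℝ) ≤ ν.real {true} * #C / 2} ≤
      exp (-(ν.real {true} * #C / 8)) := by
  set q := ν.real {true}
  have hq0 : 0 ≤ q := measureReal_nonneg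
  have hq1 : q ≤ 1 := measureReal_le_one
  -- Chernoff at `t = -log 2`; `1 / 8` is a lower bound for `(1 - log 2) / 2`.
  refine (measureReal_card_filter_le_le_exp_mul ν C _ (neg_nonpos.2 (log_nonneg one_le_two))).trans ?_
  have hbase : (1 - q + q * exp (-log 2)) ^ #C ≤ exp (-(q * #C / 2)) := by
    rw [exp_neg, exp_log two_pos, show -(q * #C / 2) = #C * -(q / 2) by ring, exp_nat_mul]
    exact pow_le_pow_left₀ (by linarith) (by linarith [add_one_le_exp (-(q / 2))]) _
  have hlog : log 2 ≤ 3 / 4 := by linarith [log_two_lt_d9]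
  have hqC : 0 ≤ q * #C := by positivity
  calc _ ≤ exp (log 2 * (q * #C / 2)) * exp (-(q * #C / 2)) := by
        rw [neg_neg]; gcongr
    _ ≤ exp (-(q * #C / 8)) := by
        rw [← exp_add]; gcongr; nlinarith

end BernoulliChernoff

lemma sum_pow_card_filter_nonempty {R : Type*} [CommRing R] (V : Type*) [Fintype V] (x : R) :
    ∑ S : Finset V with S.Nonempty, x ^ #S = (x + 1) ^ Fintype.card V - 1 := by
  classical
  rw [← Fintype.sum_pow_mul_eq_add_pow V x 1, ← sum_filter_add_sum_filter_not univ Finset.Nonempty]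
  simp only [one_pow, mul_one, not_nonempty_iff_eq_empty, filter_eq', mem_univ, if_true,
    sum_singleton, card_empty, pow_zero]
  ring

lemma inv_sq_add_one_pow_sub_one_le {n : ℕ} (hn : 1 ≤ n) :
    (((n : ℝ) ^ 2)⁻¹ + 1) ^ n - 1 ≤ 2 / n := by
  have hn0 : (0 : ℝ) < n := by positivity
  have hexp : (((n : ℝ) ^ 2)⁻¹ + 1) ^ n ≤ exp (1 / n) := by
    calc _ ≤ exp ((n : ℝ) ^ 2)⁻¹ ^ n := by gcongr; exact add_one_le_exp _
      _ = exp (1 / n) := by rw [← exp_nat_mul]; field_simp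
  have habs : |(1 : ℝ) / n| ≤ 1 := by
    rw [abs_of_pos (by positivity), div_le_one hn0]; exact_mod_cast hn
  have := (abs_le.1 (abs_exp_sub_one_le habs)).2
  rw [abs_of_pos (by positivity), mul_one_div] at this
  linarith

lemma exp_neg_le_inv_sq_pow {n s : ℕ} {p : ℝ} (hp : 32 * log n / n ≤ p) (hs : (s : ℝ) ≤ n / 2) :
    exp (-(p * s * (n - s) / 8)) ≤ ((n : ℝ) ^ 2)⁻¹ ^ s := by
  rcases n.eq_zero_or_pos with rfl | hn
  · simp_all
  have hp0 : 0 ≤ p := (by positivity : 0 ≤ 32 * log n / n).trans hp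
  have hlog : 2 * s * log n ≤ p * s * (n - s) / 8 :=
    calc 2 * s * log n = 32 * log n / n * s * (n / 2) / 8 := by field_simp; ring
      _ ≤ p * s * (n - s) / 8 := by gcongr; linarith
  calc _ ≤ exp (-(2 * s * log n)) := by gcongr
    _ = ((n : ℝ) ^ 2)⁻¹ ^ s := by
        rw [show -(2 * s * log n) = s * -log ((n : ℝ) ^ 2) by rw [log_pow]; push_cast; ring,
          exp_nat_mul, exp_neg, exp_log (by positivity)]

namespace STCPaper

variable {V : Type*} [Fintype V] [DecidableEq V]

def crossPairs (S : Finset V) : Finset (Sym2 V) :=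
  (S ×ˢ Sᶜ).image fun ab => s(ab.1, ab.2)

lemma mem_crossPairs {S : Finset V} {e : Sym2 V} :
    e ∈ crossPairs S ↔ ∃ a b, e = s(a, b) ∧ a ∈ S ∧ b ∉ S := by
  simp only [crossPairs, mem_image, mem_product, mem_compl, Prod.exists]
  constructor
  · rintro ⟨a, b, ⟨ha, hb⟩, rfl⟩; exact ⟨a, b, rfl, ha, hb⟩
  · rintro ⟨a, b, rfl, ha, hb⟩; exact ⟨a, b, ⟨ha, hb⟩, rfl⟩

lemma card_crossPairs (S : Finset V) : #(crossPairs S) = #S * #Sᶜ := by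
  rw [crossPairs, card_image_of_injOn, card_product]
  rintro ⟨a, b⟩ hab ⟨c, d⟩ hcd h
  simp only [coe_product, Set.mem_prod, mem_coe, mem_compl] at hab hcd
  rcases Sym2.eq_iff.1 h with ⟨rfl, rfl⟩ | ⟨rfl, rfl⟩
  · rfl
  · exact absurd hab.1 hcd.2

lemma cutCount_graphOf {n : ℕ} (ω : Sym2 (Fin n) → Bool) (S : Finset (Fin n)) :
    cutCount (graphOf ω) S = #{e ∈ crossPairs S | ω e} := by
  rw [cutCount, ← Set.ncard_coe_finset]
  congr 1
  ext e
  simp only [coe_filter, Set.mem_ofPred_eq, mem_crossPairs, graphOf, edgeSet_fromEdgeSet,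
    Set.mem_sdiff]
  constructor
  · rintro ⟨⟨hω, -⟩, a, b, rfl, ha, hb⟩
    exact ⟨⟨a, b, rfl, ha, hb⟩, hω⟩
  · rintro ⟨⟨a, b, rfl, ha, hb⟩, hω⟩
    refine ⟨⟨hω, ?_⟩, a, b, rfl, ha, hb⟩
    rw [Sym2.mem_diagSet, Sym2.mk_isDiag_iff]
    rintro rfl; exact hb ha

lemma measure_cutCount_lt_le {n : ℕ} (ν : Measure Bool) [IsProbabilityMeasure ν]
    (S : Finset (Fin n)) :
    Measure.pi (fun _ : Sym2 (Fin n) => ν)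
        {ω | (cutCount (graphOf ω) S : ℝ) < ν.real {true} / 2 * #S * (n - #S)} ≤
      ENNReal.ofReal (exp (-(ν.real {true} * #S * (n - #S) / 8))) := by
  have hC : (#(crossPairs S) : ℝ) = #S * (n - #S) := by
    rw [card_crossPairs, card_compl, Fintype.card_fin, Nat.cast_mul,
      Nat.cast_sub (card_le_univ S |>.trans_eq (Fintype.card_fin n))]
  rw [← ofReal_measureReal]
  gcongr
  calc _ ≤ (Measure.pi fun _ => ν).real
          {ω | (#{e ∈ crossPairs S | ω e} : ℝ) ≤ ν.real {true} * #(crossPairs S) / 2} := by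
        refine measureReal_mono (fun ω hω => ?_)
        simp only [Set.mem_ofPred_eq, cutCount_graphOf, hC] at hω ⊢
        linarith
    _ ≤ _ := by
        rw [mul_assoc, ← hC]
        exact measureReal_card_filter_le_half_le ν _

set_option linter.deprecated false in
lemma erdosRenyi_cutCount_lt_le {n : ℕ} {p : ℝ} (hp0 : 0 ≤ p) (hp1 : p ≤ 1)
    (S : Finset (Fin n)) :
    erdosRenyi n p {ω | (cutCount (graphOf ω) S : ℝ) < p / 2 * #S * (n - #S)} ≤
      ENNReal.ofReal (exp (-(p * #S * (n - #S) / 8))) := by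
  unfold erdosRenyi
  set ν := (PMF.bernoulli (min p.toNNReal 1) (min_le_right _ _)).toMeasure
  have hν : ν.real {true} = p := by
    simp [ν, measureReal_def, PMF.bernoulli_apply, hp0, hp1]
  simpa only [hν] using measure_cutCount_lt_le ν S

end STCPaper

open STCPaper in
/-- Edge-expansion of the random graph `G(n,p)`: the probability that some set `S` with
`|S| ≤ n/2` has fewer than `(p/2)·|S|·(n−|S|)` outgoing edges is at most `2/n`. -/
theorem stmt_9 (n : ℕ) (hn : 4 ≤ n) (p : ℝ)
    (hp1 : 32 * Real.log n / n ≤ p) (hp2 : p ≤ 1) :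
    erdosRenyi n p {ω | ∃ S : Finset (Fin n), (S.card : ℝ) ≤ (n : ℝ) / 2 ∧
        (cutCount (graphOf ω) ↑S : ℝ) < p / 2 * S.card * ((n : ℝ) - S.card)} ≤
      ENNReal.ofReal (2 / n) := by
  have hp0 : 0 ≤ p := (by positivity : (0 : ℝ) ≤ 32 * log n / n).trans hp1
  set E := fun S : Finset (Fin n) =>
    {ω : Sym2 (Fin n) → Bool | (cutCount (graphOf ω) S : ℝ) < p / 2 * #S * (n - #S)}
  set 𝒮 : Finset (Finset (Fin n)) := {S | S.Nonempty ∧ (#S : ℝ) ≤ n / 2}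
  have hcover : {ω | ∃ S : Finset (Fin n), (#S : ℝ) ≤ n / 2 ∧ ω ∈ E S} ⊆ ⋃ S ∈ 𝒮, E S := by
    rintro ω ⟨S, hS, hcut⟩
    have hne : S.Nonempty := by
      rw [nonempty_iff_ne_empty]
      rintro rfl
      simp only [E, Set.mem_ofPred_eq, card_empty, CharP.cast_eq_zero, mul_zero, zero_mul] at hcut
      exact hcut.not_ge (Nat.cast_nonneg _)
    exact Set.mem_biUnion (by simp [𝒮, hne, hS]) hcut
  calc _ ≤ erdosRenyi n p (⋃ S ∈ 𝒮, E S) := measure_mono hcover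
    _ ≤ ∑ S ∈ 𝒮, erdosRenyi n p (E S) := measure_biUnion_finset_le _ _
    _ ≤ ∑ S ∈ 𝒮, ENNReal.ofReal (((n : ℝ) ^ 2)⁻¹ ^ #S) := by
        refine sum_le_sum fun S hS => (erdosRenyi_cutCount_lt_le hp0 hp2 S).trans ?_
        exact ENNReal.ofReal_le_ofReal (exp_neg_le_inv_sq_pow hp1 (mem_filter.1 hS).2.2)
    _ ≤ ∑ S : Finset (Fin n) with S.Nonempty, ENNReal.ofReal (((n : ℝ) ^ 2)⁻¹ ^ #S) :=
        sum_le_sum_of_subset fun S hS => by simp_all [𝒮]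
    _ = ENNReal.ofReal ((((n : ℝ) ^ 2)⁻¹ + 1) ^ n - 1) := by
        rw [← ENNReal.ofReal_sum_of_nonneg (fun _ _ => by positivity),
          sum_pow_card_filter_nonempty, Fintype.card_fin]
    _ ≤ ENNReal.ofReal (2 / n) :=
        ENNReal.ofReal_le_ofReal (inv_sq_add_one_pow_sub_one_le (by omega))
end

section
/- There exists an integer n₀ such that for every n ≥ n₀ and every real p with 64·(ln n)/n ≤ p ≤ 1, in the Erdős–Rényi random graph G(n,p) the following holds with probability at least 1 − e^{−n/16}: every vertex set S with |S| = ⌈1/p⌉ satisfies |N(S)| ≥ n/25. -/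
open SimpleGraph

/-! If some `S` with `|S| = s = ⌈1/p⌉` has `|N(S)| ≤ ⌊n/25⌋`, then some `W` of size
`m = n - s - ⌊n/25⌋` outside `S ∪ N(S)` receives no edge from `S`. A union bound over the at most
`C(n,s) · 2^n` pairs `(S, W)`, each free of cross edges with probability
`(1-p)^{sm} ≤ e^{-psm} ≤ e^{-m}`, bounds the failure probability by `exp(s log n + n log 2 - m)`.
The hypothesis `p ≥ 64 log n / n` gives `s log n ≤ n/64 + log n`, and `log 2 < 0.7` leaves room
for `-n/16`. -/

open MeasureTheory Finset Real

namespace STCPaper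

section Neighbourhood

variable {V : Type*} [Fintype V] [DecidableEq V]

lemma exists_subset_card_eq_forall_not_adj (G : SimpleGraph V) {S : Finset V} {t : ℕ}
    (h : nbrCount G S ≤ t) :
    ∃ W ⊆ univ \ S, #W = Fintype.card V - #S - t ∧ ∀ u ∈ S, ∀ v ∈ W, ¬G.Adj u v := by
  classical
  set N : Finset V := {v | v ∉ S ∧ ∃ u ∈ S, G.Adj u v}
  have hN : #N ≤ t := by
    rwa [nbrCount, show {v | v ∉ (S : Set V) ∧ ∃ u ∈ (S : Set V), G.Adj u v} = N by
      ext; simp [N], Set.ncard_coe_finset] at h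
  have hNS : N ⊆ univ \ S := fun v hv => by simp_all [N]
  have hcard : Fintype.card V - #S - t ≤ #((univ \ S) \ N) := by
    rw [card_sdiff_of_subset hNS, card_univ_sdiff]
    omega
  obtain ⟨W, hW, hWcard⟩ := exists_subset_card_eq hcard
  refine ⟨W, hW.trans sdiff_subset, hWcard, fun u hu v hv hadj => ?_⟩
  have hv := hW hv
  simp only [mem_sdiff, mem_univ, true_and] at hv
  exact hv.2 (by simpa [N, hv.1] using ⟨u, hu, hadj⟩)

end Neighbourhood

section CrossEdges

variable {α : Type*} [DecidableEq α]

def crossEdges (S W : Finset α) : Finset (Sym2 α) :=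
  (S ×ˢ W).image fun q => s(q.1, q.2)

lemma card_crossEdges {S W : Finset α} (h : Disjoint S W) : #(crossEdges S W) = #S * #W := by
  rw [crossEdges, card_image_of_injOn, card_product]
  rintro ⟨a, b⟩ hab ⟨c, d⟩ hcd hs
  simp only [coe_product, Set.mem_prod, mem_coe] at hab hcd
  rcases Sym2.eq_iff.1 hs with ⟨rfl, rfl⟩ | ⟨rfl, rfl⟩
  · rfl
  · exact absurd hcd.2 (disjoint_left.1 h hab.1)

end CrossEdges

variable {n : ℕ}

instance (p : ℝ) : IsProbabilityMeasure (erdosRenyi n p) := by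
  unfold erdosRenyi; infer_instance

lemma erdosRenyi_forall_eq_false {p : ℝ} (hp0 : 0 ≤ p) (hp1 : p ≤ 1) (E : Finset (Sym2 (Fin n))) :
    erdosRenyi n p {ω | ∀ e ∈ E, ω e = false} = ENNReal.ofReal ((1 - p) ^ #E) := by
  have hpi : {ω : Sym2 (Fin n) → Bool | ∀ e ∈ E, ω e = false} = (E : Set _).pi fun _ => {false} := by
    ext ω; simp
  rw [hpi, erdosRenyi, Measure.pi_pi_finset, ENNReal.ofReal_pow (sub_nonneg.2 hp1),
    ENNReal.ofReal_sub _ hp0, ENNReal.ofReal_one]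
  simp [min_eq_left (Real.toNNReal_le_one.2 hp1), PMF.bernoulli_apply, ENNReal.ofReal]

lemma setOf_exists_nbrCount_le_subset (s t : ℕ) :
    {ω : Sym2 (Fin n) → Bool | ∃ S : Finset (Fin n), #S = s ∧ nbrCount (graphOf ω) S ≤ t} ⊆
      ⋃ S ∈ powersetCard s univ, ⋃ W ∈ powersetCard (n - s - t) (univ \ S),
        {ω | ∀ e ∈ crossEdges S W, ω e = false} := by
  rintro ω ⟨S, rfl, hS⟩
  obtain ⟨W, hWS, hW, hnadj⟩ := exists_subset_card_eq_forall_not_adj _ hS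
  simp only [Set.mem_iUnion]
  refine ⟨S, by simp, W, mem_powersetCard.2 ⟨hWS, by simpa using hW⟩, ?_⟩
  simp only [crossEdges, mem_image, mem_product, Set.mem_ofPred_eq]
  rintro _ ⟨⟨u, v⟩, ⟨hu, hv⟩, rfl⟩
  have huv : u ≠ v := by rintro rfl; simpa [hu] using hWS hv
  simpa [graphOf, huv] using hnadj u hu v hv

lemma erdosRenyi_exists_nbrCount_le_le {p : ℝ} (hp0 : 0 ≤ p) (hp1 : p ≤ 1) (s t : ℕ) :
    erdosRenyi n p {ω | ∃ S : Finset (Fin n), #S = s ∧ nbrCount (graphOf ω) S ≤ t} ≤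
      ENNReal.ofReal (n.choose s * 2 ^ n * (1 - p) ^ (s * (n - s - t))) := by
  set c := ENNReal.ofReal ((1 - p) ^ (s * (n - s - t)))
  calc _ ≤ ∑ S ∈ powersetCard s univ, ∑ W ∈ powersetCard (n - s - t) (univ \ S),
          erdosRenyi n p {ω | ∀ e ∈ crossEdges S W, ω e = false} :=
        (measure_mono (setOf_exists_nbrCount_le_subset s t)).trans <|
          (measure_biUnion_finset_le _ _).trans <|
            sum_le_sum fun _ _ => measure_biUnion_finset_le _ _
    _ = ∑ S ∈ powersetCard s univ, ∑ W ∈ powersetCard (n - s - t) (univ \ S), c := by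
        refine sum_congr rfl fun S hS => sum_congr rfl fun W hW => ?_
        rw [mem_powersetCard] at hS hW
        rw [erdosRenyi_forall_eq_false hp0 hp1,
          card_crossEdges (disjoint_of_subset_right hW.1 disjoint_sdiff), hS.2, hW.2]
    _ ≤ ∑ S ∈ powersetCard s (univ : Finset (Fin n)), 2 ^ n * c := by
        refine sum_le_sum fun S _ => ?_
        rw [sum_const, nsmul_eq_mul, card_powersetCard]
        gcongr
        exact_mod_cast (Nat.choose_le_two_pow _ _).trans
          (Nat.pow_le_pow_right two_pos ((card_le_univ _).trans (by simp)))
    _ = _ := by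
        rw [sum_const, nsmul_eq_mul, card_powersetCard, card_univ, Fintype.card_fin,
          ENNReal.ofReal_mul (by positivity), ENNReal.ofReal_mul (by positivity)]
        simp [c, mul_assoc]

lemma log_le_div_hundred {x : ℝ} (hx : 40000 ≤ x) : log x ≤ x / 100 := by
  have hx0 : 0 < x := by linarith
  have hsqrt : 200 ≤ √x := (le_sqrt (by norm_num) hx0.le).2 (by linarith)
  have hlog : log x = 2 * log √x := by rw [log_sqrt hx0.le]; ring
  have := log_le_sub_one_of_pos (sqrt_pos.2 hx0)
  nlinarith [mul_self_sqrt hx0.le]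

lemma natCeil_inv_mul_log_le {x p : ℝ} (hx : 0 < x) (hlog : 0 < log x)
    (hp : 64 * log x / x ≤ p) : ⌈1 / p⌉₊ * log x ≤ x / 64 + log x := by
  have hp0 : 0 < p := (by positivity : 0 < 64 * log x / x).trans_le hp
  have hinv : 1 / p * log x ≤ x / 64 := by
    rw [div_le_iff₀ hx] at hp
    rw [div_mul_eq_mul_div, div_le_iff₀ hp0]
    linarith
  nlinarith [Nat.ceil_lt_add_one (by positivity : 0 ≤ 1 / p)]

lemma one_sub_pow_le_exp {p : ℝ} (hp1 : p ≤ 1) (k : ℕ) : (1 - p) ^ k ≤ exp (-(p * k)) := by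
  rw [show -(p * k) = k * -p by ring, exp_nat_mul]
  exact pow_le_pow_left₀ (by linarith) (one_sub_le_exp_neg p) k

lemma choose_mul_two_pow_mul_one_sub_pow_le (hn : 40000 ≤ n) {p : ℝ}
    (hpl : 64 * log n / n ≤ p) (hp1 : p ≤ 1) :
    n.choose ⌈1 / p⌉₊ * 2 ^ n * (1 - p) ^ (⌈1 / p⌉₊ * (n - ⌈1 / p⌉₊ - ⌊(n : ℝ) / 25⌋₊)) ≤
      exp (-n / 16) := by
  set s := ⌈1 / p⌉₊
  set t := ⌊(n : ℝ) / 25⌋₊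
  set m := n - s - t
  have hn' : (40000 : ℝ) ≤ n := by exact_mod_cast hn
  have hlog1 : 1 ≤ log n := by
    rw [le_log_iff_exp_le (by linarith)]
    linarith [exp_one_lt_d9]
  have hp0 : 0 < p := (by positivity : 0 < 64 * log n / n).trans_le hpl
  have hps : 1 ≤ p * s := by
    rw [← div_le_iff₀' hp0]
    exact Nat.le_ceil _
  have hslog := natCeil_inv_mul_log_le (by linarith) (by linarith) hpl
  have hm : (n : ℝ) - s - n / 25 ≤ m := by
    have : n ≤ m + s + t := by omega
    have : (t : ℝ) ≤ n / 25 := Nat.floor_le (by positivity)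
    have : (n : ℝ) ≤ m + s + t := by exact_mod_cast ‹n ≤ m + s + t›
    linarith
  have hchoose : (n.choose s : ℝ) ≤ exp (s * log n) := by
    rw [exp_nat_mul, exp_log (by linarith)]
    exact_mod_cast Nat.choose_le_pow n s
  have htwo : (2 : ℝ) ^ n = exp (n * log 2) := by
    rw [exp_nat_mul, exp_log two_pos]
  have hpow : (1 - p) ^ (s * m) ≤ exp (-m) := by
    refine (one_sub_pow_le_exp hp1 _).trans (exp_le_exp.2 ?_)
    push_cast
    nlinarith [(m.cast_nonneg : (0 : ℝ) ≤ m)]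
  calc (n.choose s : ℝ) * 2 ^ n * (1 - p) ^ (s * m)
      ≤ exp (s * log n) * exp (n * log 2) * exp (-m) := by
        rw [htwo]; gcongr
    _ = exp (s * log n + n * log 2 - m) := by rw [← exp_add, ← exp_add]; ring_nf
    _ ≤ exp (-n / 16) := by
        gcongr
        nlinarith [log_two_lt_d9, log_le_div_hundred hn', (s.cast_nonneg : (0 : ℝ) ≤ s)]

end STCPaper

open STCPaper in
/-- With probability at least `1 − e^{−n/16}`, every set `S` of size `⌈1/p⌉` in `G(n,p)`
satisfies `|N(S)| ≥ n/25`. -/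
theorem stmt_12 :
    ∃ n₀ : ℕ, ∀ n : ℕ, n₀ ≤ n → ∀ p : ℝ,
      64 * Real.log n / n ≤ p → p ≤ 1 →
      ENNReal.ofReal (1 - Real.exp (-(n : ℝ) / 16)) ≤
        erdosRenyi n p {ω | ∀ S : Finset (Fin n), S.card = ⌈1 / p⌉₊ →
          (n : ℝ) / 25 ≤ (nbrCount (graphOf ω) ↑S : ℝ)} := by
  refine ⟨40000, fun n hn p hpl hp1 => ?_⟩
  set good := {ω : Sym2 (Fin n) → Bool | ∀ S : Finset (Fin n), S.card = ⌈1 / p⌉₊ →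
    (n : ℝ) / 25 ≤ (nbrCount (graphOf ω) ↑S : ℝ)}
  have hbad : goodᶜ ⊆ {ω | ∃ S : Finset (Fin n), #S = ⌈1 / p⌉₊ ∧
      nbrCount (graphOf ω) S ≤ ⌊(n : ℝ) / 25⌋₊} := by
    intro ω hω
    simp only [good, Set.mem_compl_iff, Set.mem_ofPred_eq, not_forall, not_le] at hω
    obtain ⟨S, hS, hlt⟩ := hω
    exact ⟨S, hS, Nat.le_floor hlt.le⟩
  have hp0 : 0 ≤ p := (by positivity : 0 ≤ 64 * log n / n).trans hpl
  calc ENNReal.ofReal (1 - exp (-n / 16))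
      = 1 - ENNReal.ofReal (exp (-n / 16)) := by
        rw [ENNReal.ofReal_sub _ (exp_pos _).le, ENNReal.ofReal_one]
    _ ≤ 1 - erdosRenyi n p goodᶜ := by
        gcongr
        exact (measure_mono hbad).trans <| (erdosRenyi_exists_nbrCount_le_le hp0 hp1 _ _).trans <|
          ENNReal.ofReal_le_ofReal (choose_mul_two_pow_mul_one_sub_pow_le hn hpl hp1)
    _ = erdosRenyi n p good := by
        rw [← prob_compl_eq_one_sub good.toFinite.measurableSet.compl, compl_compl]
end

section
/- For every integer n ≥ 1 and every real p with 0 < p ≤ 1, in the Erdős–Rényi random graph G(n,p) the following holds with probability at least 1 − e^{−n}: for every vertex set A with |A| ≤ n/2 and every S ⊆ A, the number of vertices in V∖A adjacent to some vertex of S is at least |S| − 12/p. -/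
open SimpleGraph

/-!
A set `S ⊆ A` with fewer than `|S| − 12/p` neighbours outside `A` leaves a set `T` of at least
`n/2 − |S| + 12/p` vertices outside `A` with no edge to `S`, and then `p |S| |T| ≥ 6n`. For a fixed
pair `(S, T)` the probability that none of the `|S| |T|` edges between them is present is
`(1 − p)^{|S||T|} ≤ e^{−6n}`, and a union bound over the at most `4^n` pairs leaves
`4^n e^{−6n} ≤ e^{−n}` since `4 ≤ e^5`.
-/

open MeasureTheory

namespace STCPaper

open Finset

lemma ofReal_one_sub_le_of_measure_compl_le {Ω : Type*} [MeasurableSpace Ω] {μ : Measure Ω}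
    [IsProbabilityMeasure μ] {s : Set Ω} {ε : ℝ} (hε : 0 ≤ ε)
    (h : μ sᶜ ≤ ENNReal.ofReal ε) : ENNReal.ofReal (1 - ε) ≤ μ s := by
  rw [ENNReal.ofReal_sub 1 hε, ENNReal.ofReal_one, tsub_le_iff_right]
  calc 1 = μ Set.univ := measure_univ.symm
    _ ≤ μ s + μ sᶜ := measure_univ_le_add_compl s
    _ ≤ μ s + ENNReal.ofReal ε := by gcongr

section EdgesBetween

variable {V : Type*} [DecidableEq V]

def edgesBetween (S T : Finset V) : Finset (Sym2 V) :=
  (S ×ˢ T).image fun q => s(q.1, q.2)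

lemma card_edgesBetween {S T : Finset V} (hST : Disjoint S T) :
    #(edgesBetween S T) = #S * #T := by
  rw [edgesBetween, card_image_of_injOn, card_product]
  rintro ⟨a, b⟩ hab ⟨c, d⟩ hcd h
  rw [coe_product, Set.mem_prod] at hab hcd
  rcases Sym2.eq_iff.1 h with ⟨rfl, rfl⟩ | ⟨rfl, rfl⟩
  · rfl
  · exact absurd hcd.2 (disjoint_left.1 hST hab.1)

end EdgesBetween

section Probability

variable {n : ℕ} {p : ℝ}

instance : IsProbabilityMeasure (erdosRenyi n p) := by
  rw [erdosRenyi]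
  infer_instance

lemma erdosRenyi_edges_absent (hp0 : 0 ≤ p) (hp1 : p ≤ 1) (F : Finset (Sym2 (Fin n))) :
    erdosRenyi n p {ω | ∀ e ∈ F, ω e = false} = ENNReal.ofReal (1 - p) ^ #F := by
  classical
  have hcyl : {ω : Sym2 (Fin n) → Bool | ∀ e ∈ F, ω e = false} =
      Set.univ.pi fun e => if e ∈ F then {false} else Set.univ := by
    ext ω
    simp only [Set.mem_ofPred_eq, Set.mem_pi, Set.mem_univ, true_implies]
    refine forall_congr' fun e => ?_
    split_ifs <;> simp [*]
  rw [erdosRenyi, hcyl, Measure.pi_pi]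
  set ν := (PMF.bernoulli (min (Real.toNNReal p) 1) (min_le_right _ _)).toMeasure
  have hν_false : ν {false} = ENNReal.ofReal (1 - p) := by
    rw [PMF.toMeasure_apply_singleton _ _ (measurableSet_singleton _), PMF.bernoulli_apply,
      cond_false, min_eq_left (Real.toNNReal_le_one.2 hp1), ENNReal.ofReal_sub 1 hp0,
      ENNReal.ofReal_one]
    rfl
  simp_rw [apply_ite ν, hν_false, measure_univ]
  rw [prod_ite_mem, univ_inter, prod_const]

lemma erdosRenyi_edgesBetween_absent_le (hp0 : 0 ≤ p) (hp1 : p ≤ 1) {S T : Finset (Fin n)}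
    (hST : Disjoint S T) :
    erdosRenyi n p {ω | ∀ e ∈ edgesBetween S T, ω e = false} ≤
      ENNReal.ofReal (Real.exp (-(p * #S * #T))) := by
  rw [erdosRenyi_edges_absent hp0 hp1, card_edgesBetween hST,
    ← ENNReal.ofReal_pow (by linarith)]
  refine ENNReal.ofReal_le_ofReal ?_
  calc (1 - p) ^ (#S * #T) ≤ Real.exp (-p) ^ (#S * #T) :=
        pow_le_pow_left₀ (by linarith) (by linarith [Real.add_one_le_exp (-p)]) _
    _ = Real.exp (-(p * #S * #T)) := by
        rw [← Real.exp_nat_mul]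
        push_cast
        ring_nf

lemma four_pow_mul_exp_le (n : ℕ) :
    (4 : ℝ) ^ n * Real.exp (-(6 * n)) ≤ Real.exp (-n) := by
  have h4 : (4 : ℝ) ≤ Real.exp 5 := by linarith [Real.add_one_le_exp 5]
  calc (4 : ℝ) ^ n * Real.exp (-(6 * n)) ≤ Real.exp 5 ^ n * Real.exp (-(6 * n)) := by
        gcongr
    _ = Real.exp (-n) := by rw [← Real.exp_nat_mul, ← Real.exp_add]; ring_nf

lemma erdosRenyi_exists_large_pair_edgesBetween_absent_le (hp0 : 0 ≤ p) (hp1 : p ≤ 1) :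
    erdosRenyi n p {ω | ∃ S T : Finset (Fin n), Disjoint S T ∧ 6 * (n : ℝ) ≤ p * #S * #T ∧
      ∀ e ∈ edgesBetween S T, ω e = false} ≤ ENNReal.ofReal (Real.exp (-n)) := by
  set Q := (univ : Finset (Finset (Fin n) × Finset (Fin n))).filter
    fun q => Disjoint q.1 q.2 ∧ 6 * (n : ℝ) ≤ p * #q.1 * #q.2
  have hsub : {ω : Sym2 (Fin n) → Bool | ∃ S T : Finset (Fin n), Disjoint S T ∧
      6 * (n : ℝ) ≤ p * #S * #T ∧ ∀ e ∈ edgesBetween S T, ω e = false} ⊆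
      ⋃ q ∈ Q, {ω | ∀ e ∈ edgesBetween q.1 q.2, ω e = false} := by
    rintro ω ⟨S, T, hST, hbig, hω⟩
    exact Set.mem_biUnion (x := (S, T)) (by simp [Q, hST, hbig]) hω
  calc _ ≤ ∑ q ∈ Q, erdosRenyi n p {ω | ∀ e ∈ edgesBetween q.1 q.2, ω e = false} :=
        (measure_mono hsub).trans (measure_biUnion_finset_le _ _)
    _ ≤ ∑ _q ∈ Q, ENNReal.ofReal (Real.exp (-(6 * n))) := by
        refine sum_le_sum fun q hq => ?_
        obtain ⟨-, hST, hbig⟩ := mem_filter.1 hq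
        refine (erdosRenyi_edgesBetween_absent_le hp0 hp1 hST).trans ?_
        exact ENNReal.ofReal_le_ofReal (Real.exp_le_exp.2 (by linarith))
    _ ≤ 4 ^ n * ENNReal.ofReal (Real.exp (-(6 * n))) := by
        rw [sum_const, nsmul_eq_mul]
        gcongr
        calc (#Q : ENNReal) ≤ Fintype.card (Finset (Fin n) × Finset (Fin n)) := by
              exact_mod_cast card_le_univ Q
          _ = 4 ^ n := by simp [Fintype.card_finset, ← mul_pow]
    _ ≤ ENNReal.ofReal (Real.exp (-n)) := by
        rw [← ENNReal.ofReal_ofNat, ← ENNReal.ofReal_pow (by norm_num),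
          ← ENNReal.ofReal_mul (by positivity)]
        exact ENNReal.ofReal_le_ofReal (four_pow_mul_exp_le n)

end Probability

lemma edgesBetween_absent_of_not_adj {n : ℕ} {ω : Sym2 (Fin n) → Bool} {S T : Finset (Fin n)}
    (hST : Disjoint S T) (h : ∀ u ∈ S, ∀ v ∈ T, ¬ (graphOf ω).Adj u v) :
    ∀ e ∈ edgesBetween S T, ω e = false := by
  simp only [edgesBetween, mem_image, mem_product, Prod.exists, forall_exists_index, and_imp]
  rintro _ u v hu hv rfl
  have huv : u ≠ v := fun huv => disjoint_left.1 hST hu (huv ▸ hv)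
  simpa [graphOf, huv] using h u hu v hv

lemma six_mul_le_mul_mul_of_le_half_sub_add_div {n s t p : ℝ} (hp : 0 < p) (hs : s ≤ n / 2)
    (hps : 12 < p * s) (ht : n / 2 - s + 12 / p ≤ t) : 6 * n ≤ p * s * t := by
  -- `p s t ≥ p s (n/2 − s) + 12 s ≥ 12 (n/2 − s) + 12 s = 6n`
  have hst : p * s * (n / 2 - s + 12 / p) = p * s * (n / 2 - s) + 12 * s := by
    field_simp
  nlinarith [mul_le_mul_of_nonneg_left ht (by positivity : 0 ≤ p * s)]

lemma exists_nonadjacent_of_nbrWithinCount_lt {V : Type*} [Fintype V]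
    (G : SimpleGraph V) {p : ℝ} (hp : 0 < p) {A S : Finset V}
    (hA : (#A : ℝ) ≤ Fintype.card V / 2) (hSA : S ⊆ A)
    (hlt : (nbrWithinCount G S (A : Set V)ᶜ : ℝ) < #S - 12 / p) :
    ∃ T : Finset V, Disjoint S T ∧ 6 * (Fintype.card V : ℝ) ≤ p * #S * #T ∧
      ∀ u ∈ S, ∀ v ∈ T, ¬ G.Adj u v := by
  classical
  set N := Aᶜ.filter fun v => ∃ u ∈ S, G.Adj u v
  set T := Aᶜ.filter fun v => ¬ ∃ u ∈ S, G.Adj u v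
  have hN : nbrWithinCount G S (A : Set V)ᶜ = #N := by
    rw [nbrWithinCount, ← Set.ncard_coe_finset]
    congr 1
    ext v
    simp [N]
  have hNT : #N + #T = Fintype.card V - #A := by
    rw [card_filter_add_card_filter_not, card_compl]
  have hAV : #A ≤ Fintype.card V := card_le_univ A
  have hSA' : (#S : ℝ) ≤ #A := by exact_mod_cast card_le_card hSA
  have hps : 12 < p * #S := by
    have : 12 / p < #S := by rw [hN] at hlt; linarith [(#N).cast_nonneg (α := ℝ)]
    rwa [div_lt_iff₀ hp, mul_comm] at this
  refine ⟨T, ?_, six_mul_le_mul_mul_of_le_half_sub_add_div hp (hSA'.trans hA) hps ?_, ?_⟩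
  · exact disjoint_left.2 fun x hxS hxT => (mem_compl.1 (mem_filter.1 hxT).1) (hSA hxS)
  · have : (#N : ℝ) + #T = Fintype.card V - #A := by
      rw [← Nat.cast_sub hAV, ← hNT, Nat.cast_add]
    rw [hN] at hlt
    linarith
  · exact fun u hu v hv huv => (mem_filter.1 hv).2 ⟨u, hu, huv⟩

end STCPaper

open STCPaper in
theorem stmt_14_general (n : ℕ) (p : ℝ) (hp0 : 0 < p) (hp1 : p ≤ 1) :
    ENNReal.ofReal (1 - Real.exp (-(n : ℝ))) ≤
      erdosRenyi n p {ω | ∀ A : Finset (Fin n), (A.card : ℝ) ≤ (n : ℝ) / 2 →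
        ∀ S ⊆ A, (S.card : ℝ) - 12 / p ≤
          (nbrWithinCount (graphOf ω) ↑S (↑A : Set (Fin n))ᶜ : ℝ)} := by
  refine ofReal_one_sub_le_of_measure_compl_le (Real.exp_nonneg _) ((measure_mono ?_).trans
    (erdosRenyi_exists_large_pair_edgesBetween_absent_le hp0.le hp1))
  intro ω hω
  simp only [Set.mem_compl_iff, Set.mem_ofPred_eq, not_forall, not_le] at hω
  obtain ⟨A, hA, S, hSA, hlt⟩ := hω
  obtain ⟨T, hST, hbig, hT⟩ := exists_nonadjacent_of_nbrWithinCount_lt (graphOf ω) hp0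
    (by simpa using hA) hSA hlt
  exact ⟨S, T, hST, by simpa using hbig, edgesBetween_absent_of_not_adj hST hT⟩

open STCPaper in
/-- With probability at least `1 − e^{−n}`, for every `A` with `|A| ≤ n/2` and every
`S ⊆ A`, at least `|S| − 12/p` vertices outside `A` are adjacent to some vertex of `S`. -/
theorem stmt_14 (n : ℕ) (hn : 1 ≤ n) (p : ℝ) (hp0 : 0 < p) (hp1 : p ≤ 1) :
    ENNReal.ofReal (1 - Real.exp (-(n : ℝ))) ≤
      erdosRenyi n p {ω | ∀ A : Finset (Fin n), (A.card : ℝ) ≤ (n : ℝ) / 2 →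
        ∀ S ⊆ A, (S.card : ℝ) - 12 / p ≤
          (nbrWithinCount (graphOf ω) ↑S (↑A : Set (Fin n))ᶜ : ℝ)} :=
  stmt_14_general n p hp0 hp1
end
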